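/- arXiv:0811.2407 — 2 statements merged into one kernel-verified Lean document; each statement's English description precedes it below -/
import Mathlib

section
/- Let C ⊆ P^2 × P^2 be the image of ψ([s:t]) = [t^2 s - 4s^3 : t^3 - 4s^2 t : t^2 s - 3s^3] × [s^2 t - t^3 : s^3 - s t^2 : t^3]. Then the intersection of C with the secant line {[0:0:1]} × {4y_0 + 3y_2 = 0} consists exactly of the two points ψ([1:2]) and ψ([1:-2]). -/
/-!
Let C ⊆ ℙ² × ℙ² be the image of ψ([s:t]) =
  [t²s - 4s³ : t³ - 4s²t : t²s - 3s³] × [s²t - t³ : s³ - st² : t³].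
The intersection of C with the secant line {[0:0:1]} × {4y₀ + 3y₂ = 0} consists
exactly of ψ([1:2]) and ψ([1:-2]).  Equivalently, the points [s:t] ∈ ℙ¹ with
[t²s - 4s³ : t³ - 4s²t : t²s - 3s³] = [0:0:1] and 4(s²t - t³) + 3t³ = 0 are
exactly [1:2] and [1:-2].
(Note [s:t] = [1:2] ↔ t = 2s ∧ s ≠ 0, and [s:t] = [1:-2] ↔ t = -2s ∧ s ≠ 0.)
-/
theorem secant_line_second_factor :
    ∀ s t : ℂ, ¬(s = 0 ∧ t = 0) →
      ((t ^ 2 * s - 4 * s ^ 3 = 0 ∧ t ^ 3 - 4 * s ^ 2 * t = 0 ∧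
        t ^ 2 * s - 3 * s ^ 3 ≠ 0 ∧
        4 * (s ^ 2 * t - t ^ 3) + 3 * t ^ 3 = 0) ↔
      ((t = 2 * s ∧ s ≠ 0) ∨ (t = -2 * s ∧ s ≠ 0))) := by
  intro s t hst
  constructor
  · rintro ⟨h1, h2, h3, h4⟩
    have hs : s ≠ 0 := by
      rintro rfl
      have ht : t ≠ 0 := fun ht => hst ⟨rfl, ht⟩
      apply ht
      have : t ^ 3 = 0 := by linear_combination h2
      exact pow_eq_zero_iff (n := 3) (by norm_num) |>.mp this
    have hfac : s * ((t - 2 * s) * (t + 2 * s)) = 0 := by ring_nf; linear_combination h1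
    rcases mul_eq_zero.mp hfac with h | h
    · exact absurd h hs
    · rcases mul_eq_zero.mp h with h | h
      · exact Or.inl ⟨by linear_combination h, hs⟩
      · exact Or.inr ⟨by linear_combination h, hs⟩
  · rintro (⟨rfl, hs⟩ | ⟨rfl, hs⟩) <;>
      refine ⟨by ring, by ring, ?_, by ring⟩ <;>
      · intro h
        apply hs
        have : s ^ 3 = 0 := by linear_combination h
        exact pow_eq_zero_iff (n := 3) (by norm_num) |>.mp this
end

section
/- The map ψ: P^1 → P^2 × P^2 given by ψ([s:t]) = [t^2 s - 4s^3 : t^3 - 4s^2 t : t^2 s - 3s^3] × [s^2 t - t^3 : s^3 - s t^2 : t^3] is injective. -/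
/-!
The map ψ : ℙ¹ → ℙ² × ℙ², ψ([s:t]) =
  [t²s - 4s³ : t³ - 4s²t : t²s - 3s³] × [s²t - t³ : s³ - st² : t³]
is injective: if ψ([s:t]) = ψ([s':t']) — i.e. the two coordinate triples of
[s':t'] are nonzero scalar multiples of those of [s:t] — then [s:t] = [s':t']
as points of ℙ¹, i.e. (s',t') is a nonzero scalar multiple of (s,t).
-/
theorem psi_injective :
    ∀ s t s' t' : ℂ, ¬(s = 0 ∧ t = 0) → ¬(s' = 0 ∧ t' = 0) →
      (∃ μ : ℂ, μ ≠ 0 ∧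
        t' ^ 2 * s' - 4 * s' ^ 3 = μ * (t ^ 2 * s - 4 * s ^ 3) ∧
        t' ^ 3 - 4 * s' ^ 2 * t' = μ * (t ^ 3 - 4 * s ^ 2 * t) ∧
        t' ^ 2 * s' - 3 * s' ^ 3 = μ * (t ^ 2 * s - 3 * s ^ 3)) →
      (∃ ν : ℂ, ν ≠ 0 ∧
        s' ^ 2 * t' - t' ^ 3 = ν * (s ^ 2 * t - t ^ 3) ∧
        s' ^ 3 - s' * t' ^ 2 = ν * (s ^ 3 - s * t ^ 2) ∧
        t' ^ 3 = ν * t ^ 3) →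
      ∃ c : ℂ, c ≠ 0 ∧ s' = c * s ∧ t' = c * t := by
  rintro s t s' t' hst hst' ⟨μ, hμ, h1, h2, h3⟩ ⟨ν, hν, g1, g2, g3⟩
  have e1 : s' ^ 3 = μ * s ^ 3 := by linear_combination h3 - h1
  by_cases ht : t = 0
  · have hs : s ≠ 0 := fun h => hst ⟨h, ht⟩
    have ht' : t' = 0 := by
      have h0 : t' ^ 3 = 0 := by rw [g3, ht]; ring
      exact pow_eq_zero_iff (by norm_num) |>.mp h0
    have hs' : s' ≠ 0 := fun h => hst' ⟨h, ht'⟩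
    exact ⟨s' / s, div_ne_zero hs' hs, by field_simp, by rw [ht, ht']; ring⟩
  · have ht' : t' ≠ 0 := by
      intro h
      apply ht
      have h0 : ν * t ^ 3 = 0 := by rw [← g3, h]; ring
      rcases mul_eq_zero.mp h0 with h' | h'
      · exact absurd h' hν
      · exact pow_eq_zero_iff (by norm_num) |>.mp h'
    have hD : s * t' - s' * t = 0 := by
      by_cases hs : s = 0
      · have hs' : s' = 0 := by
          have h0 : s' ^ 3 = 0 := by rw [e1, hs]; ring
          exact pow_eq_zero_iff (by norm_num) |>.mp h0
        rw [hs, hs']; ring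
      · -- H : s'² t² = t'² s²
        have key : t' * t * (s' ^ 2 * t ^ 2 - t' ^ 2 * s ^ 2) = 0 := by
          linear_combination t ^ 3 * g1 + (t ^ 3 - s ^ 2 * t) * g3
        have H : s' ^ 2 * t ^ 2 - t' ^ 2 * s ^ 2 = 0 := by
          rcases mul_eq_zero.mp key with h' | h'
          · exact absurd h' (mul_ne_zero ht' ht)
          · exact h'
        have A : t' ^ 2 * (s ^ 2 - t ^ 2) * (s' * t - s * t') = 0 := by
          linear_combination t ^ 3 * g2 - (s ^ 3 - s * t ^ 2) * g3 - t * s' * H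
        have B : t' ^ 2 * s ^ 2 * (t ^ 2 - 4 * s ^ 2) * (s * t' - s' * t) = 0 := by
          linear_combination t ^ 2 * s ^ 3 * h2 - t ^ 2 * (t ^ 3 - 4 * s ^ 2 * t) * e1 +
            (4 * s ^ 3 * t' + s' * (t ^ 3 - 4 * s ^ 2 * t)) * H
        by_contra hDne
        have hD' : s' * t - s * t' ≠ 0 := fun h => hDne (by linear_combination -h)
        have hA : s ^ 2 - t ^ 2 = 0 := by
          rcases mul_eq_zero.mp A with h' | h'
          · rcases mul_eq_zero.mp h' with h'' | h''
            · exact absurd h'' (pow_ne_zero 2 ht')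
            · exact h''
          · exact absurd h' hD'
        have hB : t ^ 2 - 4 * s ^ 2 = 0 := by
          rcases mul_eq_zero.mp B with h' | h'
          · rcases mul_eq_zero.mp h' with h'' | h''
            · rcases mul_eq_zero.mp h'' with h3' | h3'
              · exact absurd h3' (pow_ne_zero 2 ht')
              · exact absurd h3' (pow_ne_zero 2 hs)
            · exact h''
          · exact absurd h' hDne
        have : s ^ 2 = 0 := by linear_combination (hA + hB) / (-3)
        exact hs (pow_eq_zero_iff (by norm_num) |>.mp this)
    refine ⟨t' / t, div_ne_zero ht' ht, ?_, by field_simp⟩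
    field_simp
    linear_combination -hD
end
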